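/- arXiv:2601.12869 — 8 statements merged into one kernel-verified Lean document; each statement's English description precedes it below -/
import Mathlib

section
/- Let p > 1, and let ν̃ ∈ (1/(p' p^{p'-1}), 1) where p' = p/(p-1). Define a sequence by a_0 = 1 and a_{n+1} = a_n^{1/p} - ν̃. If the sequence (a_n) is bounded below by some positive constant, then (a_n) is decreasing and converges to a limit a_∞ ∈ (0,1) satisfying ν̃ = a_∞^{1/p}(1 - a_∞); but since the maximum of x ↦ x^{1/p}(1-x)^{1/p'} on (0,1) is 1/(p' p^{p'-1}) < ν̃, no such positive lower bound can exist. In other words, the sequence a_n eventually becomes nonpositive. -/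
/-! While `a n > 0`, Young's inequality `x^{1/p} ≤ x + 1/(p' p^{p'-1})` shows that each step lowers
`a n` by at least `ν - 1/(p' p^{p'-1}) > 0`, so the sequence cannot stay positive. -/

open Real

/-- Young's inequality for the factors `(p x)^{1/p}` and `p^{-1/p}`. -/
lemma Real.rpow_one_div_le_add {p q x : ℝ} (hpq : p.HolderConjugate q) (hx : 0 ≤ x) :
    x ^ (1 / p) ≤ x + 1 / (q * p ^ (q - 1)) := by
  have hp : 0 < p := hpq.pos
  have hq : 0 < q := hpq.symm.pos
  have young := young_inequality_of_nonneg (rpow_nonneg (by positivity : 0 ≤ p * x) (1 / p))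
    (rpow_nonneg (by positivity : (0 : ℝ) ≤ 1 / p) (1 / p)) hpq
  have hprod : (p * x) ^ (1 / p) * (1 / p) ^ (1 / p) = x ^ (1 / p) := by
    rw [← mul_rpow (by positivity) (by positivity)]
    congr 1
    field_simp
  have hfirst : ((p * x) ^ (1 / p)) ^ p / p = x := by
    rw [← rpow_mul (by positivity), one_div_mul_cancel hp.ne', rpow_one]
    field_simp
  have hsecond : ((1 / p : ℝ) ^ (1 / p)) ^ q / q = 1 / (q * p ^ (q - 1)) := by
    rw [← rpow_mul (by positivity), show 1 / p * q = q - 1 by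
      rw [← hpq.symm.div_conj_eq_sub_one]; ring, one_div, inv_rpow hp.le]
    have : 0 < p ^ (q - 1) := rpow_pos_of_pos hp _
    field_simp
  rwa [hprod, hfirst, hsecond] at young

lemma exists_le_zero_of_sub_le {a : ℕ → ℝ} {ε : ℝ} (hε : 0 < ε)
    (h : ∀ n, 0 < a n → a (n + 1) ≤ a n - ε) : ∃ n, a n ≤ 0 := by
  by_contra! hpos
  have hbound : ∀ n : ℕ, a n ≤ a 0 - n * ε := by
    intro n
    induction n with
    | zero => simp
    | succ k ih => push_cast; linarith [h k (hpos k)]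
  obtain ⟨n, hn⟩ := Archimedean.arch (a 0) hε
  rw [nsmul_eq_mul] at hn
  linarith [hbound n, hpos n]

theorem stmt3_general (p p' ν : ℝ) (hp : 1 < p) (hp' : p' = p / (p - 1))
    (hν₁ : 1 / (p' * p ^ (p' - 1)) < ν)
    (a : ℕ → ℝ)
    (ha : ∀ n, a (n + 1) = (max (a n) 0) ^ (1 / p) - ν) :
    ∃ n, a n ≤ 0 := by
  have hpq : p.HolderConjugate p' := (holderConjugate_iff_eq_conjExponent hp).2 hp'
  refine exists_le_zero_of_sub_le (sub_pos.2 hν₁) fun n hn => ?_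
  rw [ha n, max_eq_left hn.le]
  linarith [rpow_one_div_le_add hpq hn.le]

/-- For `p > 1`, `p' = p/(p-1)` and `ν̃ ∈ (1/(p' p^{p'-1}), 1)`, the sequence
`a_0 = 1`, `a_{n+1} = (a_n^+)^{1/p} - ν̃` eventually becomes nonpositive. -/
theorem stmt3 (p p' ν : ℝ) (hp : 1 < p) (hp' : p' = p / (p - 1))
    (hν₁ : 1 / (p' * p ^ (p' - 1)) < ν) (hν₂ : ν < 1)
    (a : ℕ → ℝ) (ha0 : a 0 = 1)
    (ha : ∀ n, a (n + 1) = (max (a n) 0) ^ (1 / p) - ν) :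
    ∃ n, a n ≤ 0 :=
  stmt3_general p p' ν hp hp' hν₁ a ha
end

section
/- Let p > 1, p' = p/(p-1), c ∈ ℝ, h ∈ L^∞(0,1), and f ∈ L^1(0,1) with f > 0 on (0,1) and f lower semicontinuous on (0,1). If y : [0,1] → ℝ is absolutely continuous, satisfies y'(t) = p'[(c - h(t))(max(y(t),0))^{1/p} - f(t)] for a.e. t ∈ (0,1), and y(1) = 0, then y(t) > 0 for all t ∈ (0,1). -/
open MeasureTheory Set Filter Topology

/-!
Write `G` for the right-hand side, so that `y(t) - y(s) = ∫ₛᵗ G`. Where `y < 0` the nonlinear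
term vanishes and `G = -p' f < 0`, so `y` strictly decreases there; following `y` from a negative
value up to its first nonnegative point gives a contradiction, hence `y ≥ 0`. If `y(t₀) = 0`, then
near `t₀` the term `(c - h)(y⁺)^{1/p}` is a bounded factor times something tending to `0`, while
lower semicontinuity keeps `f > f(t₀)/2`; so `G < 0` just right of `t₀` and `y` becomes negative.
-/

theorem ContinuousOn.exists_mem_Ioc_nonneg_forall_Ico_neg {g : ℝ → ℝ} {a b : ℝ} (hab : a ≤ b)
    (hg : ContinuousOn g (Icc a b)) (ha : g a < 0) (hb : 0 ≤ g b) :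
    ∃ t ∈ Ioc a b, 0 ≤ g t ∧ ∀ τ ∈ Ico a t, g τ < 0 := by
  set S := Icc a b ∩ g ⁻¹' Ici 0
  have hS : IsClosed S := hg.preimage_isClosed_of_isClosed isClosed_Icc isClosed_Ici
  have hSbdd : BddBelow S := ⟨a, fun x hx => hx.1.1⟩
  obtain ⟨⟨hat, htb⟩, ht⟩ := hS.csInf_mem ⟨b, right_mem_Icc.2 hab, hb⟩ hSbdd
  refine ⟨sInf S, ⟨hat.lt_of_ne fun h => ha.not_ge (h ▸ ht), htb⟩, ht, fun τ hτ => ?_⟩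
  exact not_le.1 fun hτ' => hτ.2.not_ge (csInf_le hSbdd ⟨⟨hτ.1, hτ.2.le.trans htb⟩, hτ'⟩)

theorem intervalIntegral_neg_of_neg_on {f : ℝ → ℝ} {a b : ℝ}
    (hfi : IntervalIntegrable f volume a b) (hneg : ∀ x ∈ Ioo a b, f x < 0) (hab : a < b) :
    ∫ x in a..b, f x < 0 := by
  have := intervalIntegral.intervalIntegral_pos_of_pos_on (f := fun x => -f x) hfi.neg
    (fun x hx => neg_pos.2 (hneg x hx)) hab
  rwa [intervalIntegral.integral_neg, neg_pos] at this

section IntegralEquation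

variable {G y : ℝ → ℝ} {a b : ℝ}

theorem sub_eq_integral_of_eq_neg_integral (hG : IntegrableOn G (Icc a b))
    (hy : ∀ t ∈ Icc a b, y t = -∫ τ in t..b, G τ) {s t : ℝ} (hs : s ∈ Icc a b)
    (ht : t ∈ Icc a b) : y t - y s = ∫ τ in s..t, G τ := by
  have hGi : ∀ u ∈ Icc a b, IntervalIntegrable G volume b u := fun u hu =>
    (hG.mono_set (uIcc_subset_Icc (right_mem_Icc.2 (hu.1.trans hu.2)) hu)).intervalIntegrable
  rw [hy t ht, hy s hs, ← intervalIntegral.integral_symm, ← intervalIntegral.integral_symm]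
  exact intervalIntegral.integral_interval_sub_left (hGi t ht) (hGi s hs)

theorem continuousOn_of_eq_neg_integral (hG : IntegrableOn G (Icc a b))
    (hy : ∀ t ∈ Icc a b, y t = -∫ τ in t..b, G τ) : ContinuousOn y (Icc a b) := by
  rcases lt_or_ge b a with hba | hab
  · simp [Icc_eq_empty_of_lt hba]
  have hprim := intervalIntegral.continuousOn_primitive_interval' (μ := volume)
    (hG.mono_set (uIcc_of_le hab).subset).intervalIntegrable (right_mem_uIcc (a := a) (b := b))
  refine (hprim.mono Icc_subset_uIcc).congr fun t ht => ?_
  rw [hy t ht, intervalIntegral.integral_symm, neg_neg]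

theorem lt_of_eq_neg_integral_of_neg_on (hG : IntegrableOn G (Icc a b))
    (hy : ∀ t ∈ Icc a b, y t = -∫ τ in t..b, G τ) {s t : ℝ} (hs : s ∈ Icc a b)
    (ht : t ∈ Icc a b) (hst : s < t) (hneg : ∀ τ ∈ Ioo s t, G τ < 0) : y t < y s := by
  have hGi : IntervalIntegrable G volume s t :=
    (hG.mono_set (uIcc_subset_Icc hs ht)).intervalIntegrable
  linarith [sub_eq_integral_of_eq_neg_integral hG hy hs ht,
    intervalIntegral_neg_of_neg_on hGi hneg hst]

theorem pos_of_eq_neg_integral (hG : IntegrableOn G (Icc a b))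
    (hy : ∀ t ∈ Icc a b, y t = -∫ τ in t..b, G τ) (hyb : y b = 0)
    (hneg : ∀ τ ∈ Ioo a b, y τ < 0 → G τ < 0)
    (hzero : ∀ t ∈ Ioo a b, y t = 0 → ∀ᶠ τ in 𝓝[>] t, G τ < 0) :
    ∀ t ∈ Ioo a b, 0 < y t := by
  have hyc := continuousOn_of_eq_neg_integral hG hy
  have hnonneg : ∀ t ∈ Ioc a b, 0 ≤ y t := by
    intro t₀ ht₀
    by_contra! hy₀
    obtain ⟨t₁, ht₁, hyt₁, hlt⟩ := (hyc.mono (Icc_subset_Icc_left ht₀.1.le))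
      |>.exists_mem_Ioc_nonneg_forall_Ico_neg ht₀.2 hy₀ hyb.ge
    have := lt_of_eq_neg_integral_of_neg_on hG hy (Ioc_subset_Icc_self ht₀)
      ⟨ht₀.1.le.trans ht₁.1.le, ht₁.2⟩ ht₁.1
      fun τ hτ => hneg τ ⟨ht₀.1.trans hτ.1, hτ.2.trans_le ht₁.2⟩ (hlt τ (Ioo_subset_Ico_self hτ))
    linarith
  intro t₀ ht₀
  refine (hnonneg t₀ (Ioo_subset_Ioc_self ht₀)).lt_of_ne' fun hy₀ => ?_
  obtain ⟨t, ht, hsub⟩ := (mem_nhdsGT_iff_exists_mem_Ioc_Ioo_subset ht₀.2).1 (hzero t₀ ht₀ hy₀)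
  have := lt_of_eq_neg_integral_of_neg_on hG hy (Ioo_subset_Icc_self ht₀)
    ⟨ht₀.1.le.trans ht.1.le, ht.2⟩ ht.1 hsub
  linarith [hnonneg t ⟨ht₀.1.trans ht.1, ht.2⟩]

end IntegralEquation

theorem eventually_mul_rpow_sub_neg {p p' c M t : ℝ} {h f y : ℝ → ℝ} (hp : 0 < p) (hp' : 0 < p')
    (hh : ∀ᶠ τ in 𝓝 t, |h τ| ≤ M) (hft : 0 < f t) (hf : LowerSemicontinuousAt f t)
    (hy : ContinuousAt y t) (hyt : y t ≤ 0) :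
    ∀ᶠ τ in 𝓝 t, p' * ((c - h τ) * max (y τ) 0 ^ (1 / p) - f τ) < 0 := by
  have hbdd : IsBoundedUnder (· ≤ ·) (𝓝 t) (norm ∘ fun τ => c - h τ) :=
    isBoundedUnder_of_eventually_le (a := |c| + M) <| hh.mono fun τ hτ => by
      simp only [Function.comp_apply, Real.norm_eq_abs]
      linarith [abs_sub c (h τ)]
  have hrpow : Tendsto (fun τ => max (y τ) 0 ^ (1 / p)) (𝓝 t) (𝓝 0) := by
    have := ((hy.max (continuousAt_const (y := 0))).rpow_const (p := 1 / p)
      (Or.inr (one_div_pos.2 hp).le))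
    rwa [max_eq_right hyt, Real.zero_rpow (one_div_pos.2 hp).ne'] at this
  filter_upwards [(isBoundedUnder_le_mul_tendsto_zero hbdd hrpow).eventually
    (gt_mem_nhds (half_pos hft)), hf (f t / 2) (half_lt_self hft)] with τ hsmall hlarge
  exact mul_neg_of_pos_of_neg hp' (by linarith)

theorem stmt4_general (p p' c : ℝ) (hp : 1 < p) (hp' : p' = p / (p - 1))
    (h f y : ℝ → ℝ)
    (hhb : ∃ M, ∀ t ∈ Set.Ioo (0 : ℝ) 1, |h t| ≤ M)
    (hfpos : ∀ t ∈ Set.Ioo (0 : ℝ) 1, 0 < f t)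
    (hflsc : LowerSemicontinuousOn f (Set.Ioo 0 1))
    (hFint : IntegrableOn
      (fun τ => p' * ((c - h τ) * (max (y τ) 0) ^ (1 / p) - f τ)) (Set.Icc 0 1))
    (hy1 : y 1 = 0)
    (hysol : ∀ t ∈ Set.Icc (0 : ℝ) 1,
      y t = -∫ τ in t..1, p' * ((c - h τ) * (max (y τ) 0) ^ (1 / p) - f τ)) :
    ∀ t ∈ Set.Ioo (0 : ℝ) 1, 0 < y t := by
  obtain ⟨M, hM⟩ := hhb
  have hp0 : 0 < p := zero_lt_one.trans hp
  have hp'0 : 0 < p' := hp' ▸ div_pos hp0 (sub_pos.2 hp)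
  refine pos_of_eq_neg_integral hFint hysol hy1 (fun τ hτ hyτ => ?_) (fun t ht hyt => ?_)
  · rw [max_eq_right hyτ.le, Real.zero_rpow (one_div_pos.2 hp0).ne', mul_zero, zero_sub]
    exact mul_neg_of_pos_of_neg hp'0 (neg_neg_of_pos (hfpos τ hτ))
  · have hIoo : Ioo (0 : ℝ) 1 ∈ 𝓝 t := Ioo_mem_nhds ht.1 ht.2
    have hft : LowerSemicontinuousAt f t := fun a ha => nhdsWithin_eq_nhds.2 hIoo ▸ hflsc t ht a ha
    have hyt' : ContinuousAt y t := (continuousOn_of_eq_neg_integral hFint hysol).continuousAt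
      (Icc_mem_nhds ht.1 ht.2)
    exact (eventually_mul_rpow_sub_neg hp0 hp'0 (eventually_of_mem hIoo hM) (hfpos t ht) hft hyt'
      hyt.le).filter_mono nhdsWithin_le_nhds

/-- Positivity of Carathéodory solutions of the backward initial value problem
`y' = p'[(c - h)(y⁺)^{1/p} - f]`, `y(1) = 0`, where `f > 0` is lower semicontinuous and
integrable on `(0,1)` and `h` is essentially bounded.  The solution is encoded through
its equivalent integral formulation. -/
theorem stmt4 (p p' c : ℝ) (hp : 1 < p) (hp' : p' = p / (p - 1))
    (h f y : ℝ → ℝ)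
    (hhm : Measurable h) (hhb : ∃ M, ∀ t ∈ Set.Ioo (0 : ℝ) 1, |h t| ≤ M)
    (hfint : IntegrableOn f (Set.Ioo 0 1))
    (hfpos : ∀ t ∈ Set.Ioo (0 : ℝ) 1, 0 < f t)
    (hflsc : LowerSemicontinuousOn f (Set.Ioo 0 1))
    (hFint : IntegrableOn
      (fun τ => p' * ((c - h τ) * (max (y τ) 0) ^ (1 / p) - f τ)) (Set.Icc 0 1))
    (hy1 : y 1 = 0)
    (hysol : ∀ t ∈ Set.Icc (0 : ℝ) 1,
      y t = -∫ τ in t..1, p' * ((c - h τ) * (max (y τ) 0) ^ (1 / p) - f τ)) :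
    ∀ t ∈ Set.Ioo (0 : ℝ) 1, 0 < y t :=
  stmt4_general p p' c hp hp' h f y hhb hfpos hflsc hFint hy1 hysol
end

section
/- Let p > 1, p' = p/(p-1), h ∈ L^∞(0,1), f ∈ L^1(0,1) with f > 0 lower semicontinuous on (0,1). If c_1 ≤ c_2 and y_{c_1}, y_{c_2} denote the unique solutions of the backward problem y' = p'[(c_i - h)(y^+)^{1/p} - f], y(1) = 0, then y_{c_1}(t) ≥ y_{c_2}(t) for all t ∈ [0,1]. -/
/-!
A solution stays nonnegative, because `y' = -p' f ≤ 0` wherever `y < 0` while `y 1 = 0`. It is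
even positive on `(0, 1)`: near an interior zero, lower semicontinuity of `f > 0` makes `y'`
negative, so `y` would turn negative to the right.

Where `y > 0`, the substitution `z = y ^ (1 / p')` turns the equation into
`z' = c - h - f y ^ (-1 / p)`, whose right-hand side increases with `c` and decreases with `y`.
So if `y₁ < y₂` at some `t₀`, then `y₂ ^ (1 / p') - y₁ ^ (1 / p')` is nondecreasing up to the
first later point where `y₂ ≤ y₁` (which exists since both vanish at `1`), where it is `≤ 0`:
a contradiction. Solutions are absolutely continuous, so this monotonicity follows from the sign
of the derivative almost everywhere.
-/

open MeasureTheory Set Filter Topology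
open scoped NNReal

theorem LipschitzOnWith.comp_absolutelyContinuousOnInterval {f g : ℝ → ℝ} {a b : ℝ}
    {s : Set ℝ} {K : ℝ≥0} (hg : LipschitzOnWith K g s)
    (hf : AbsolutelyContinuousOnInterval f a b) (hfs : MapsTo f (uIcc a b) s) :
    AbsolutelyContinuousOnInterval (g ∘ f) a b := by
  refine squeeze_zero' (Eventually.of_forall fun _ ↦ Finset.sum_nonneg fun _ _ ↦ dist_nonneg)
    ?_ (by simpa using Tendsto.const_mul (K : ℝ) hf)
  rw [eventually_inf_principal]
  filter_upwards with E hE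
  rw [Finset.mul_sum]
  gcongr with i hi
  exact hg.dist_le_mul _ (hfs (hE.1 i hi).1) _ (hfs (hE.1 i hi).2)

namespace AbsolutelyContinuousOnInterval

theorem congr {f g : ℝ → ℝ} {a b : ℝ}
    (hf : AbsolutelyContinuousOnInterval f a b) (hfg : EqOn f g (uIcc a b)) :
    AbsolutelyContinuousOnInterval g a b := by
  refine hf.congr' ?_
  rw [EventuallyEq, eventually_inf_principal]
  filter_upwards with E hE
  exact Finset.sum_congr rfl fun i hi ↦ by rw [hfg (hE.1 i hi).1, hfg (hE.1 i hi).2]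

theorem rpow_const {f : ℝ → ℝ} {a b : ℝ} (hf : AbsolutelyContinuousOnInterval f a b)
    (hpos : ∀ x ∈ uIcc a b, 0 < f x) (q : ℝ) :
    AbsolutelyContinuousOnInterval (fun x ↦ f x ^ q) a b := by
  obtain ⟨x₀, hx₀, hmin⟩ :=
    isCompact_uIcc.exists_isMinOn nonempty_uIcc hf.continuousOn
  obtain ⟨C, hC⟩ := hf.exists_bound
  have hrpow : ContDiffOn ℝ 1 (· ^ q) (Icc (f x₀) C) :=
    contDiffOn_id.rpow_const_of_ne fun x hx ↦ ((hpos x₀ hx₀).trans_le hx.1).ne'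
  obtain ⟨K, hK⟩ := hrpow.exists_lipschitzOnWith one_ne_zero (convex_Icc _ _) isCompact_Icc
  exact hK.comp_absolutelyContinuousOnInterval hf
    fun x hx ↦ ⟨hmin hx, (le_abs_self _).trans (hC x hx)⟩

theorem le_of_ae_hasDerivAt_nonneg {ψ ψ' : ℝ → ℝ} {a b : ℝ} (hab : a ≤ b)
    (hψ : AbsolutelyContinuousOnInterval ψ a b)
    (hderiv : ∀ᵐ x, x ∈ Ioo a b → HasDerivAt ψ (ψ' x) x ∧ 0 ≤ ψ' x) : ψ a ≤ ψ b := by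
  rw [← sub_nonneg, ← hψ.integral_deriv_eq_sub]
  refine intervalIntegral.integral_nonneg_of_ae_restrict hab ?_
  rw [EventuallyLE, ← Measure.restrict_congr_set Ioo_ae_eq_Icc, ae_restrict_iff' measurableSet_Ioo]
  filter_upwards [hderiv] with x hx hxI
  simpa [(hx hxI).1.deriv] using (hx hxI).2

end AbsolutelyContinuousOnInterval

theorem ContinuousOn.exists_first_nonpos {u : ℝ → ℝ} {a b : ℝ} (hab : a ≤ b)
    (hu : ContinuousOn u (Icc a b)) (ha : 0 < u a) (hb : u b ≤ 0) :
    ∃ c ∈ Ioc a b, u c ≤ 0 ∧ ∀ t ∈ Ico a c, 0 < u t := by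
  set B := Icc a b ∩ u ⁻¹' Iic 0
  have hB : IsClosed B := hu.preimage_isClosed_of_isClosed isClosed_Icc isClosed_Iic
  have hBbdd : BddBelow B := ⟨a, fun t ht ↦ ht.1.1⟩
  obtain ⟨⟨hac, hcb⟩, hc⟩ : sInf B ∈ B := hB.csInf_mem ⟨b, ⟨hab, le_rfl⟩, hb⟩ hBbdd
  refine ⟨sInf B, ⟨hac.lt_of_ne ?_, hcb⟩, hc, fun t ht ↦ ?_⟩
  · exact fun h ↦ (show u a ≤ 0 from h ▸ hc).not_gt ha
  · by_contra! hut
    exact (csInf_le hBbdd ⟨⟨ht.1, ht.2.le.trans hcb⟩, hut⟩).not_gt ht.2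

structure IsPrimitiveVanishingAtOne (F y : ℝ → ℝ) : Prop where
  integrableOn : IntegrableOn F (Icc 0 1)
  eq_neg_integral : ∀ t ∈ Icc (0 : ℝ) 1, y t = -∫ τ in t..1, F τ

namespace IsPrimitiveVanishingAtOne

variable {F y : ℝ → ℝ}

theorem intervalIntegrable (hy : IsPrimitiveVanishingAtOne F y) {u v : ℝ}
    (hu : u ∈ Icc (0 : ℝ) 1) (hv : v ∈ Icc (0 : ℝ) 1) : IntervalIntegrable F volume u v :=
  (hy.integrableOn.mono_set (uIcc_subset_Icc hu hv)).intervalIntegrable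

theorem apply_one (hy : IsPrimitiveVanishingAtOne F y) : y 1 = 0 := by
  simpa using hy.eq_neg_integral 1 (right_mem_Icc.2 zero_le_one)

theorem eq_add_integral (hy : IsPrimitiveVanishingAtOne F y) {u v : ℝ}
    (hu : u ∈ Icc (0 : ℝ) 1) (hv : v ∈ Icc (0 : ℝ) 1) : y v = y u + ∫ τ in u..v, F τ := by
  have h1 : (1 : ℝ) ∈ Icc (0 : ℝ) 1 := right_mem_Icc.2 zero_le_one
  rw [hy.eq_neg_integral u hu, hy.eq_neg_integral v hv,
    ← intervalIntegral.integral_add_adjacent_intervals (hy.intervalIntegrable hu hv)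
      (hy.intervalIntegrable hv h1)]
  ring

theorem eqOn_integral (hy : IsPrimitiveVanishingAtOne F y) :
    EqOn y (fun t ↦ ∫ τ in 1..t, F τ) (Icc 0 1) := fun t ht ↦ by
  rw [hy.eq_neg_integral t ht, intervalIntegral.integral_symm, neg_neg]

theorem absolutelyContinuousOnInterval (hy : IsPrimitiveVanishingAtOne F y) {u v : ℝ}
    (hu : u ∈ Icc (0 : ℝ) 1) (hv : v ∈ Icc (0 : ℝ) 1) : AbsolutelyContinuousOnInterval y u v :=
  ((hy.intervalIntegrable (left_mem_Icc.2 zero_le_one) (right_mem_Icc.2 zero_le_one)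
    ).absolutelyContinuousOnInterval_intervalIntegral (c := 1) (by simp)
    |>.congr fun t ht ↦ (hy.eqOn_integral (by simpa using ht)).symm).mono
    (uIcc_subset_uIcc (by simpa using hu) (by simpa using hv))

theorem continuousOn (hy : IsPrimitiveVanishingAtOne F y) : ContinuousOn y (Icc 0 1) := by
  simpa using (hy.absolutelyContinuousOnInterval (left_mem_Icc.2 zero_le_one)
    (right_mem_Icc.2 zero_le_one)).continuousOn

theorem ae_hasDerivAt (hy : IsPrimitiveVanishingAtOne F y) :
    ∀ᵐ t, t ∈ Ioo (0 : ℝ) 1 → HasDerivAt y (F t) t := by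
  filter_upwards [(hy.intervalIntegrable (left_mem_Icc.2 zero_le_one)
    (right_mem_Icc.2 zero_le_one)).ae_hasDerivAt_integral] with t ht ht01
  refine (ht (by simpa using Ioo_subset_Icc_self ht01) 1 (by simp)).congr_of_eventuallyEq ?_
  filter_upwards [Icc_mem_nhds ht01.1 ht01.2] with s hs using hy.eqOn_integral hs

theorem nonneg (hy : IsPrimitiveVanishingAtOne F y)
    (hF : ∀ t ∈ Ioo (0 : ℝ) 1, y t < 0 → F t ≤ 0) : ∀ t ∈ Icc (0 : ℝ) 1, 0 ≤ y t := by
  intro t₀ ht₀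
  by_contra! hneg
  obtain ⟨c, hc, hyc, hlt⟩ := ((hy.continuousOn.mono (Icc_subset_Icc_left ht₀.1)).neg
    ).exists_first_nonpos ht₀.2 (neg_pos.2 hneg) (by simp [hy.apply_one])
  have hcI : c ∈ Icc (0 : ℝ) 1 := ⟨ht₀.1.trans hc.1.le, hc.2⟩
  have hint : ∫ τ in t₀..c, F τ ≤ ∫ _ in t₀..c, (0 : ℝ) :=
    intervalIntegral.integral_mono_on_of_le_Ioo hc.1.le (hy.intervalIntegrable ht₀ hcI)
      intervalIntegrable_const fun τ hτ ↦
        hF τ ⟨ht₀.1.trans_lt hτ.1, hτ.2.trans_le hc.2⟩ (neg_pos.1 (hlt τ ⟨hτ.1.le, hτ.2⟩))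
  have := hy.eq_add_integral ht₀ hcI
  simp only [intervalIntegral.integral_zero] at hint
  linarith [neg_nonpos.1 hyc]

theorem exists_lt_of_eventually_neg (hy : IsPrimitiveVanishingAtOne F y) {t₀ : ℝ}
    (ht₀ : t₀ ∈ Ioo (0 : ℝ) 1) (hF : ∀ᶠ τ in 𝓝 t₀, F τ < 0) : ∃ t ∈ Icc (0 : ℝ) 1, y t < y t₀ := by
  obtain ⟨l, u, ⟨hl, hu⟩, hsub⟩ := (hF.and (Ioo_mem_nhds ht₀.1 ht₀.2)).exists_Ioo_subset
  obtain ⟨t, htu⟩ : (Ioo t₀ u).Nonempty := nonempty_Ioo.2 hu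
  have ht : t ∈ Icc (0 : ℝ) 1 := Ioo_subset_Icc_self (hsub ⟨hl.trans htu.1, htu.2⟩).2
  have hneg : 0 < ∫ τ in t₀..t, -F τ :=
    intervalIntegral.intervalIntegral_pos_of_pos_on
      (hy.intervalIntegrable (Ioo_subset_Icc_self ht₀) ht).neg
      (fun τ hτ ↦ neg_pos.2 (hsub ⟨hl.trans hτ.1, hτ.2.trans htu.2⟩).1) htu.1
  rw [intervalIntegral.integral_neg] at hneg
  exact ⟨t, ht, by linarith [hy.eq_add_integral (Ioo_subset_Icc_self ht₀) ht]⟩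

theorem pos (hy : IsPrimitiveVanishingAtOne F y)
    (hnonpos : ∀ t ∈ Ioo (0 : ℝ) 1, y t < 0 → F t ≤ 0)
    (hneg : ∀ t ∈ Ioo (0 : ℝ) 1, y t ≤ 0 → ∀ᶠ τ in 𝓝 t, F τ < 0) :
    ∀ t ∈ Ioo (0 : ℝ) 1, 0 < y t := by
  intro t₀ ht₀
  by_contra! hy₀
  obtain ⟨t, ht, hlt⟩ := hy.exists_lt_of_eventually_neg ht₀ (hneg t₀ ht₀ hy₀)
  exact (hy.nonneg hnonpos t ht).not_gt (hlt.trans_le hy₀)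

end IsPrimitiveVanishingAtOne

noncomputable def waveField (p p' c : ℝ) (h f y : ℝ → ℝ) (τ : ℝ) : ℝ :=
  p' * ((c - h τ) * (max (y τ) 0) ^ (1 / p) - f τ)

section waveField

variable {p p' c τ : ℝ} {h f y : ℝ → ℝ}

theorem waveField_nonpos_of_neg (hp : p ≠ 0) (hp' : 0 ≤ p') (hf : 0 ≤ f τ) (hy : y τ < 0) :
    waveField p p' c h f y τ ≤ 0 := by
  rw [waveField, max_eq_right hy.le, Real.zero_rpow (one_div_ne_zero hp)]
  nlinarith

theorem eventually_waveField_neg {M : ℝ} (hp : 0 < p) (hp' : 0 < p') (hy : ContinuousAt y τ)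
    (hyτ : y τ ≤ 0) (hf : LowerSemicontinuousAt f τ) (hfτ : 0 < f τ)
    (hh : ∀ᶠ s in 𝓝 τ, |h s| ≤ M) : ∀ᶠ s in 𝓝 τ, waveField p p' c h f y s < 0 := by
  set K := |c| + |M| + 1
  have hK : 0 < K := by positivity
  have hroot : ContinuousAt (fun s ↦ (max (y s) 0) ^ (1 / p)) τ :=
    (hy.max continuousAt_const).rpow_const (Or.inr (one_div_pos.2 hp).le)
  have hroot₀ : (max (y τ) 0) ^ (1 / p) = 0 := by
    rw [max_eq_right hyτ, Real.zero_rpow (one_div_pos.2 hp).ne']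
  filter_upwards [hf (f τ / 2) (half_lt_self hfτ), hh,
    hroot.eventually (gt_mem_nhds (hroot₀ ▸ div_pos (half_pos hfτ) hK))] with s hfs hhs hrs
  set X := (max (y s) 0) ^ (1 / p)
  have hX : 0 ≤ X := Real.rpow_nonneg (le_max_right _ _) _
  have hcoef : c - h s ≤ K := by
    linarith [le_abs_self c, neg_abs_le (h s), le_abs_self M]
  have hKX : K * X < f τ / 2 := by rwa [lt_div_iff₀ hK, mul_comm] at hrs
  rw [waveField]
  nlinarith [mul_le_mul_of_nonneg_right hcoef hX]

theorem HasDerivAt.rpow_inv_of_waveField (hpq : p.HolderConjugate p')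
    (hy : HasDerivAt y (waveField p p' c h f y τ) τ) (hpos : 0 < y τ) :
    HasDerivAt (fun t ↦ y t ^ p'⁻¹) (c - h τ - f τ * y τ ^ (-p⁻¹)) τ := by
  convert hy.rpow_const (p := p'⁻¹) (Or.inl hpos.ne') using 1
  simp only [waveField, max_eq_left hpos.le, hpq.symm.inv_sub_one, one_div]
  have hsplit : y τ ^ (-p⁻¹) * y τ ^ p⁻¹ = 1 := by
    rw [← Real.rpow_add hpos, neg_add_cancel, Real.rpow_zero]
  have hp' : p'⁻¹ * p' = 1 := inv_mul_cancel₀ hpq.symm.ne_zero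
  linear_combination -(c - h τ) * hsplit
    + (f τ * y τ ^ (-p⁻¹) - (c - h τ) * y τ ^ (-p⁻¹) * y τ ^ p⁻¹) * hp'

namespace IsPrimitiveVanishingAtOne

theorem nonneg_of_waveField (hpq : p.HolderConjugate p') (hf : ∀ t ∈ Ioo (0 : ℝ) 1, 0 ≤ f t)
    (hy : IsPrimitiveVanishingAtOne (waveField p p' c h f y) y) :
    ∀ t ∈ Icc (0 : ℝ) 1, 0 ≤ y t :=
  hy.nonneg fun t ht hyt ↦ waveField_nonpos_of_neg hpq.ne_zero hpq.symm.nonneg (hf t ht) hyt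

theorem pos_of_waveField {M : ℝ} (hpq : p.HolderConjugate p')
    (hfpos : ∀ t ∈ Ioo (0 : ℝ) 1, 0 < f t) (hflsc : LowerSemicontinuousOn f (Ioo 0 1))
    (hh : ∀ t ∈ Ioo (0 : ℝ) 1, |h t| ≤ M)
    (hy : IsPrimitiveVanishingAtOne (waveField p p' c h f y) y) :
    ∀ t ∈ Ioo (0 : ℝ) 1, 0 < y t :=
  hy.pos (fun t ht hyt ↦ waveField_nonpos_of_neg hpq.ne_zero hpq.symm.nonneg (hfpos t ht).le hyt)
    fun t ht hyt ↦ eventually_waveField_neg hpq.pos hpq.symm.pos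
      (hy.continuousOn.continuousAt (Icc_mem_nhds ht.1 ht.2)) hyt
      (fun μ hμ ↦ nhdsWithin_eq_nhds.2 (Ioo_mem_nhds ht.1 ht.2) ▸ hflsc t ht μ hμ) (hfpos t ht)
      (eventually_of_mem (Ioo_mem_nhds ht.1 ht.2) hh)

variable {c₁ c₂ : ℝ} {y₁ y₂ : ℝ → ℝ}

theorem rpow_sub_rpow_le_of_waveField (hpq : p.HolderConjugate p') (hc : c₁ ≤ c₂)
    (hf : ∀ t ∈ Ioo (0 : ℝ) 1, 0 ≤ f t)
    (hy₁ : IsPrimitiveVanishingAtOne (waveField p p' c₁ h f y₁) y₁)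
    (hy₂ : IsPrimitiveVanishingAtOne (waveField p p' c₂ h f y₂) y₂)
    {a b : ℝ} (hab : a ≤ b) (hsub : Icc a b ⊆ Ioo 0 1)
    (hpos : ∀ t ∈ Icc a b, 0 < y₁ t) (hle : ∀ t ∈ Icc a b, y₁ t ≤ y₂ t) :
    y₂ a ^ p'⁻¹ - y₁ a ^ p'⁻¹ ≤ y₂ b ^ p'⁻¹ - y₁ b ^ p'⁻¹ := by
  have ha := Ioo_subset_Icc_self (hsub (left_mem_Icc.2 hab))
  have hb := Ioo_subset_Icc_self (hsub (right_mem_Icc.2 hab))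
  have hpos₂ : ∀ t ∈ Icc a b, 0 < y₂ t := fun t ht ↦ (hpos t ht).trans_le (hle t ht)
  refine AbsolutelyContinuousOnInterval.le_of_ae_hasDerivAt_nonneg (ψ' := fun t ↦
    (c₂ - h t - f t * y₂ t ^ (-p⁻¹)) - (c₁ - h t - f t * y₁ t ^ (-p⁻¹))) hab
    (((hy₂.absolutelyContinuousOnInterval ha hb).rpow_const (by rwa [uIcc_of_le hab]) _).fun_sub
      ((hy₁.absolutelyContinuousOnInterval ha hb).rpow_const (by rwa [uIcc_of_le hab]) _)) ?_
  filter_upwards [hy₁.ae_hasDerivAt, hy₂.ae_hasDerivAt] with t h₁ h₂ ht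
  have htI := hsub (Ioo_subset_Icc_self ht)
  refine ⟨((h₂ htI).rpow_inv_of_waveField hpq (hpos₂ t (Ioo_subset_Icc_self ht))).sub
    ((h₁ htI).rpow_inv_of_waveField hpq (hpos t (Ioo_subset_Icc_self ht))), ?_⟩
  have hroot : y₂ t ^ (-p⁻¹) ≤ y₁ t ^ (-p⁻¹) :=
    Real.rpow_le_rpow_of_nonpos (hpos t (Ioo_subset_Icc_self ht))
      (hle t (Ioo_subset_Icc_self ht)) (neg_nonpos.2 hpq.inv_nonneg)
  nlinarith [mul_le_mul_of_nonneg_left hroot (hf t htI)]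

theorem le_of_waveField_of_mem_Ioo (hpq : p.HolderConjugate p') (hc : c₁ ≤ c₂)
    (hf : ∀ t ∈ Ioo (0 : ℝ) 1, 0 ≤ f t)
    (hy₁ : IsPrimitiveVanishingAtOne (waveField p p' c₁ h f y₁) y₁)
    (hy₂ : IsPrimitiveVanishingAtOne (waveField p p' c₂ h f y₂) y₂)
    (hpos₁ : ∀ t ∈ Ioo (0 : ℝ) 1, 0 < y₁ t) (hnonneg₂ : ∀ t ∈ Icc (0 : ℝ) 1, 0 ≤ y₂ t)
    {t₀ : ℝ} (ht₀ : t₀ ∈ Ioo (0 : ℝ) 1) : y₂ t₀ ≤ y₁ t₀ := by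
  by_contra! hlt
  have hq : 0 < p'⁻¹ := inv_pos.2 hpq.symm.pos
  obtain ⟨b, hb, hyb, hlt'⟩ := ((hy₂.continuousOn.sub hy₁.continuousOn).mono
    (Icc_subset_Icc_left ht₀.1.le)).exists_first_nonpos ht₀.2.le (sub_pos.2 hlt)
    (by simp [hy₁.apply_one, hy₂.apply_one])
  have hbI : b ∈ Icc (0 : ℝ) 1 := ⟨ht₀.1.le.trans hb.1.le, hb.2⟩
  have hψ₀ : 0 < y₂ t₀ ^ p'⁻¹ - y₁ t₀ ^ p'⁻¹ :=
    sub_pos.2 (Real.rpow_lt_rpow (hpos₁ t₀ ht₀).le hlt hq)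
  have hψb : y₂ b ^ p'⁻¹ - y₁ b ^ p'⁻¹ ≤ 0 :=
    sub_nonpos.2 (Real.rpow_le_rpow (hnonneg₂ b hbI) (sub_nonpos.1 hyb) hq.le)
  have hmono : ∀ d ∈ Ioo t₀ b, y₂ t₀ ^ p'⁻¹ - y₁ t₀ ^ p'⁻¹ ≤ y₂ d ^ p'⁻¹ - y₁ d ^ p'⁻¹ :=
    fun d hd ↦ rpow_sub_rpow_le_of_waveField hpq hc hf hy₁ hy₂ hd.1.le
      (fun t ht ↦ ⟨ht₀.1.trans_le ht.1, ht.2.trans_lt (hd.2.trans_le hb.2)⟩)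
      (fun t ht ↦ hpos₁ t ⟨ht₀.1.trans_le ht.1, ht.2.trans_lt (hd.2.trans_le hb.2)⟩)
      (fun t ht ↦ (sub_pos.1 (hlt' t ⟨ht.1, ht.2.trans_lt hd.2⟩)).le)
  have hψ : ContinuousOn (fun t ↦ y₂ t ^ p'⁻¹ - y₁ t ^ p'⁻¹) (Icc 0 1) :=
    (hy₂.continuousOn.rpow_const fun _ _ ↦ Or.inr hq.le).sub
      (hy₁.continuousOn.rpow_const fun _ _ ↦ Or.inr hq.le)
  have hψb' := ContinuousWithinAt.closure_le
    (by rw [closure_Ioo hb.1.ne]; exact right_mem_Icc.2 hb.1.le) continuousWithinAt_const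
    ((hψ b hbI).mono fun t ht ↦ ⟨ht₀.1.le.trans ht.1.le, ht.2.le.trans hb.2⟩) hmono
  linarith

theorem le_of_waveField (hpq : p.HolderConjugate p') (hc : c₁ ≤ c₂)
    (hf : ∀ t ∈ Ioo (0 : ℝ) 1, 0 ≤ f t)
    (hy₁ : IsPrimitiveVanishingAtOne (waveField p p' c₁ h f y₁) y₁)
    (hy₂ : IsPrimitiveVanishingAtOne (waveField p p' c₂ h f y₂) y₂)
    (hpos₁ : ∀ t ∈ Ioo (0 : ℝ) 1, 0 < y₁ t) (hnonneg₂ : ∀ t ∈ Icc (0 : ℝ) 1, 0 ≤ y₂ t) :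
    ∀ t ∈ Icc (0 : ℝ) 1, y₂ t ≤ y₁ t := by
  have h₁ := hy₁.continuousOn
  have h₂ := hy₂.continuousOn
  rw [← closure_Ioo zero_ne_one] at h₁ h₂ ⊢
  exact le_on_closure (fun t ↦ le_of_waveField_of_mem_Ioo hpq hc hf hy₁ hy₂ hpos₁ hnonneg₂) h₂ h₁

end IsPrimitiveVanishingAtOne

end waveField

theorem stmt7_general (p p' c₁ c₂ : ℝ) (hp : 1 < p) (hp' : p' = p / (p - 1)) (hc : c₁ ≤ c₂)
    (h f y₁ y₂ : ℝ → ℝ)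
    (hhb : ∃ M, ∀ t ∈ Set.Ioo (0 : ℝ) 1, |h t| ≤ M)
    (hfpos : ∀ t ∈ Set.Ioo (0 : ℝ) 1, 0 < f t)
    (hflsc : LowerSemicontinuousOn f (Set.Ioo 0 1))
    (hF₁int : IntegrableOn
      (fun τ => p' * ((c₁ - h τ) * (max (y₁ τ) 0) ^ (1 / p) - f τ)) (Set.Icc 0 1))
    (hF₂int : IntegrableOn
      (fun τ => p' * ((c₂ - h τ) * (max (y₂ τ) 0) ^ (1 / p) - f τ)) (Set.Icc 0 1))
    (hy₁sol : ∀ t ∈ Set.Icc (0 : ℝ) 1,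
      y₁ t = -∫ τ in t..1, p' * ((c₁ - h τ) * (max (y₁ τ) 0) ^ (1 / p) - f τ))
    (hy₂sol : ∀ t ∈ Set.Icc (0 : ℝ) 1,
      y₂ t = -∫ τ in t..1, p' * ((c₂ - h τ) * (max (y₂ τ) 0) ^ (1 / p) - f τ)) :
    ∀ t ∈ Set.Icc (0 : ℝ) 1, y₂ t ≤ y₁ t := by
  obtain ⟨M, hM⟩ := hhb
  have hpq : p.HolderConjugate p' := (Real.holderConjugate_iff_eq_conjExponent hp).2 hp'
  have hf : ∀ t ∈ Ioo (0 : ℝ) 1, 0 ≤ f t := fun t ht ↦ (hfpos t ht).le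
  have hy₁ : IsPrimitiveVanishingAtOne (waveField p p' c₁ h f y₁) y₁ := ⟨hF₁int, hy₁sol⟩
  have hy₂ : IsPrimitiveVanishingAtOne (waveField p p' c₂ h f y₂) y₂ := ⟨hF₂int, hy₂sol⟩
  exact hy₁.le_of_waveField hpq hc hf hy₂ (hy₁.pos_of_waveField hpq hfpos hflsc hM)
    (hy₂.nonneg_of_waveField hpq hf)

/-- Monotone dependence on the wave speed: if `c₁ ≤ c₂` and `y₁, y₂` are the Carathéodory
solutions of the backward problems `y' = p'[(cᵢ - h)(y⁺)^{1/p} - f]`, `y(1) = 0`,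
then `y₁ ≥ y₂` on `[0,1]`. -/
theorem stmt7 (p p' c₁ c₂ : ℝ) (hp : 1 < p) (hp' : p' = p / (p - 1)) (hc : c₁ ≤ c₂)
    (h f y₁ y₂ : ℝ → ℝ)
    (hhm : Measurable h) (hhb : ∃ M, ∀ t ∈ Set.Ioo (0 : ℝ) 1, |h t| ≤ M)
    (hfint : IntegrableOn f (Set.Ioo 0 1))
    (hfpos : ∀ t ∈ Set.Ioo (0 : ℝ) 1, 0 < f t)
    (hflsc : LowerSemicontinuousOn f (Set.Ioo 0 1))
    (hF₁int : IntegrableOn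
      (fun τ => p' * ((c₁ - h τ) * (max (y₁ τ) 0) ^ (1 / p) - f τ)) (Set.Icc 0 1))
    (hF₂int : IntegrableOn
      (fun τ => p' * ((c₂ - h τ) * (max (y₂ τ) 0) ^ (1 / p) - f τ)) (Set.Icc 0 1))
    (hy₁1 : y₁ 1 = 0) (hy₂1 : y₂ 1 = 0)
    (hy₁sol : ∀ t ∈ Set.Icc (0 : ℝ) 1,
      y₁ t = -∫ τ in t..1, p' * ((c₁ - h τ) * (max (y₁ τ) 0) ^ (1 / p) - f τ))
    (hy₂sol : ∀ t ∈ Set.Icc (0 : ℝ) 1,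
      y₂ t = -∫ τ in t..1, p' * ((c₂ - h τ) * (max (y₂ τ) 0) ^ (1 / p) - f τ)) :
    ∀ t ∈ Set.Icc (0 : ℝ) 1, y₂ t ≤ y₁ t :=
  stmt7_general p p' c₁ c₂ hp hp' hc h f y₁ y₂ hhb hfpos hflsc hF₁int hF₂int hy₁sol hy₂sol
end

section
/- Let p > 1, p' = p/(p-1), c ∈ ℝ with c ≥ h_M + (p')^{1/p'} p^{1/p} μ^{1/p'}, where h_M = ess sup h and μ = sup_{t∈(0,1)} f(t)/t^{p'-1} ∈ (0,∞). Set k = ((c - h_M)/p)^{p'} and φ(t) = k t^{p'}. Then φ(1) > 0, φ > 0 on (0,1), and φ'(t) ≤ p'[(c - h(t)) φ(t)^{1/p} - f(t)] for a.e. t ∈ [0,1]; i.e., φ is a supersolution (P_c φ ≤ 0) of the backward problem. -/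
/-!
Write `a = c - h_M` and `k = (a/p)^{p'}`. Since `p'/p = p' - 1`, `φ(t)^{1/p} = (a/p)^{p'-1} t^{p'-1}`,
so after bounding `c - h(t) ≥ a` and `f(t) ≤ μ t^{p'-1}` every term of the inequality is a multiple
of `t^{p'-1}`. As `a (a/p)^{p'-1} = p k`, what remains is `μ ≤ (p - 1) k`, which is the threshold on
`c` raised to the power `p'`.
-/

open Real

namespace Real.HolderConjugate

variable {p q : ℝ} (hpq : p.HolderConjugate q)
include hpq

lemma rpow_rpow_one_div_eq_rpow_sub_one {x : ℝ} (hx : 0 ≤ x) :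
    (x ^ q) ^ (1 / p) = x ^ (q - 1) := by
  rw [← rpow_mul hx, mul_one_div, hpq.symm.div_conj_eq_sub_one]

lemma le_sub_one_mul_div_rpow_of_le {a μ : ℝ} (hμ : 0 ≤ μ)
    (ha : q ^ (1 / q) * p ^ (1 / p) * μ ^ (1 / q) ≤ a) :
    μ ≤ (p - 1) * (a / p) ^ q := by
  have hp := hpq.pos
  have hq := hpq.symm.pos
  have hpow : q * p ^ (q - 1) * μ ≤ a ^ q :=
    calc q * p ^ (q - 1) * μ = (q ^ (1 / q) * p ^ (1 / p) * μ ^ (1 / q)) ^ q := by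
          rw [mul_rpow (by positivity) (by positivity), mul_rpow (by positivity) (by positivity),
            ← rpow_mul hq.le, ← rpow_mul hp.le, ← rpow_mul hμ, one_div_mul_cancel hq.ne',
            one_div_mul_eq_div, hpq.symm.div_conj_eq_sub_one, rpow_one, rpow_one]
      _ ≤ a ^ q := rpow_le_rpow (by positivity) ha hq.le
  have ha0 : 0 ≤ a := le_trans (by positivity) ha
  calc μ = (p - 1) * (q * p ^ (q - 1) * μ) / p ^ q := by
        rw [rpow_sub_one hp.ne']
        field_simp
        linear_combination -μ * hpq.sub_one_mul_conj
    _ ≤ (p - 1) * a ^ q / p ^ q := by gcongr; exact hpq.sub_one_pos.le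
    _ = (p - 1) * (a / p) ^ q := by rw [div_rpow ha0 hp.le]; ring

lemma power_profile_supersolution {a μ b y t : ℝ} (ha : 0 ≤ a)
    (hμ : μ ≤ (p - 1) * (a / p) ^ q) (ht : 0 < t) (hab : a ≤ b) (hy : y ≤ μ * t ^ (q - 1)) :
    (a / p) ^ q * q * t ^ (q - 1) ≤ q * (b * ((a / p) ^ q * t ^ q) ^ (1 / p) - y) := by
  have hap : 0 ≤ a / p := div_nonneg ha hpq.pos.le
  have hroot : ((a / p) ^ q * t ^ q) ^ (1 / p) = (a / p) ^ (q - 1) * t ^ (q - 1) := by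
    rw [mul_rpow (by positivity) (by positivity), hpq.rpow_rpow_one_div_eq_rpow_sub_one hap,
      hpq.rpow_rpow_one_div_eq_rpow_sub_one ht.le]
  have hlead : a * (a / p) ^ (q - 1) = p * (a / p) ^ q := by
    rw [← sub_add_cancel q 1, rpow_add_one' hap (by simpa using hpq.symm.ne_zero),
      sub_add_cancel]
    field_simp [hpq.ne_zero]
  have hs : 0 ≤ t ^ (q - 1) := by positivity
  have hbound : (a / p) ^ q * t ^ (q - 1) ≤ b * ((a / p) ^ (q - 1) * t ^ (q - 1)) - y :=
    calc (a / p) ^ q * t ^ (q - 1)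
        = a * ((a / p) ^ (q - 1) * t ^ (q - 1)) - (p - 1) * (a / p) ^ q * t ^ (q - 1) := by
          rw [← mul_assoc, hlead]; ring
      _ ≤ b * ((a / p) ^ (q - 1) * t ^ (q - 1)) - μ * t ^ (q - 1) := by
          gcongr
      _ ≤ b * ((a / p) ^ (q - 1) * t ^ (q - 1)) - y := by linarith
  rw [hroot, mul_right_comm, mul_comm _ q]
  exact mul_le_mul_of_nonneg_left hbound hpq.symm.pos.le

end Real.HolderConjugate

theorem stmt12_general (p p' c hM μ : ℝ) (hp : 1 < p) (hp' : p' = p / (p - 1))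
    (h f : ℝ → ℝ)
    (hhb : ∀ t ∈ Set.Ioo (0 : ℝ) 1, h t ≤ hM)
    (hμ0 : 0 < μ)
    (hμ : ∀ t ∈ Set.Ioo (0 : ℝ) 1, f t ≤ μ * t ^ (p' - 1))
    (hc : hM + p' ^ (1 / p') * p ^ (1 / p) * μ ^ (1 / p') ≤ c) :
    (0 < ((c - hM) / p) ^ p' * (1 : ℝ) ^ p') ∧
    (∀ t ∈ Set.Ioo (0 : ℝ) 1, 0 < ((c - hM) / p) ^ p' * t ^ p') ∧
    (∀ t ∈ Set.Ioo (0 : ℝ) 1,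
      ((c - hM) / p) ^ p' * p' * t ^ (p' - 1)
        ≤ p' * ((c - h t) * (((c - hM) / p) ^ p' * t ^ p') ^ (1 / p) - f t)) := by
  have hpq : p.HolderConjugate p' := (holderConjugate_iff_eq_conjExponent hp).2 hp'
  have hthreshold : 0 < p' ^ (1 / p') * p ^ (1 / p) * μ ^ (1 / p') := by
    have := hpq.pos
    have := hpq.symm.pos
    positivity
  have ha : 0 < c - hM := by linarith
  have hk : 0 < ((c - hM) / p) ^ p' := rpow_pos_of_pos (div_pos ha hpq.pos) _
  have hμk := hpq.le_sub_one_mul_div_rpow_of_le hμ0.le (a := c - hM) (by linarith)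
  refine ⟨by simpa using hk, fun t ht => mul_pos hk (rpow_pos_of_pos ht.1 _), fun t ht => ?_⟩
  exact hpq.power_profile_supersolution ha.le hμk ht.1 (by linarith [hhb t ht]) (hμ t ht)

/-- For `c ≥ h_M + (p')^{1/p'} p^{1/p} μ^{1/p'}` the function `φ(t) = k t^{p'}` with
`k = ((c - h_M)/p)^{p'}` is a positive supersolution of the backward problem:
`φ(1) > 0`, `φ > 0` on `(0,1)` and `φ'(t) ≤ p'[(c - h(t)) φ(t)^{1/p} - f(t)]`
on `(0,1)`. -/
theorem stmt12 (p p' c hM μ : ℝ) (hp : 1 < p) (hp' : p' = p / (p - 1))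
    (h f : ℝ → ℝ)
    (hhb : ∀ t ∈ Set.Ioo (0 : ℝ) 1, h t ≤ hM)
    (hfpos : ∀ t ∈ Set.Ioo (0 : ℝ) 1, 0 < f t)
    (hμ0 : 0 < μ)
    (hμ : ∀ t ∈ Set.Ioo (0 : ℝ) 1, f t ≤ μ * t ^ (p' - 1))
    (hc : hM + p' ^ (1 / p') * p ^ (1 / p) * μ ^ (1 / p') ≤ c) :
    (0 < ((c - hM) / p) ^ p' * (1 : ℝ) ^ p') ∧
    (∀ t ∈ Set.Ioo (0 : ℝ) 1, 0 < ((c - hM) / p) ^ p' * t ^ p') ∧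
    (∀ t ∈ Set.Ioo (0 : ℝ) 1,
      ((c - hM) / p) ^ p' * p' * t ^ (p' - 1)
        ≤ p' * ((c - h t) * (((c - hM) / p) ^ p' * t ^ p') ^ (1 / p) - f t)) :=
  stmt12_general p p' c hM μ hp hp' h f hhb hμ0 hμ hc
end

section
/- Let p > 1, p' = p/(p-1), and suppose h : [0,1] → ℝ is bounded measurable with h(0) > h(t) for all t ∈ (0,1), and f satisfies 0 < f(t) ≤ (1/(p' p^{p'/p})) (h(0) - h(t)) [∫_0^t (h(0) - h(τ)) dτ]^{p'/p} for t ∈ [0,1]. Define K(t) = [(1/p) ∫_0^t (h(0) - h(τ)) dτ]^{p'}. Then K(0) = 0, K > 0 on (0,1), K(1) ≥ 0, and K'(t) ≤ p'[(h(0) - h(t)) K(t)^{1/p} - f(t)] for a.e. t ∈ [0,1]; i.e., K is a supersolution of the backward problem at c = h(0). -/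
/-!
With `F(t) = ∫₀ᵗ (h(0) - h)`, Lebesgue's differentiation theorem gives `F' = h(0) - h` a.e., so
`K = (F/p)^{p'}` has `K' = (p'/p)(h(0) - h)(F/p)^{p'/p}` a.e., using `p' - 1 = p'/p`. Since also
`K^{1/p} = (F/p)^{p'/p}` and `p' - p'/p = 1`, the supersolution inequality reduces to
`p' f ≤ (h(0) - h)(F/p)^{p'/p}`, which is the assumed bound on `f`.
-/

open MeasureTheory Set

lemma intervalIntegrable_of_norm_le {E : Type*} [NormedAddCommGroup E] {f : ℝ → E} {a b M : ℝ}
    (hf : AEStronglyMeasurable f volume) (hM : ∀ t ∈ uIcc a b, ‖f t‖ ≤ M) :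
    IntervalIntegrable f volume a b :=
  (IntegrableOn.of_bound measure_Icc_lt_top hf.restrict M
    ((ae_restrict_iff' measurableSet_Icc).2 (ae_of_all _ hM))).intervalIntegrable

lemma Real.HolderConjugate.deriv_rpow_le_of_le {p q F g c : ℝ} (hpq : p.HolderConjugate q)
    (hF : 0 ≤ F) (hc : c ≤ 1 / (q * p ^ (q / p)) * g * F ^ (q / p)) :
    1 / p * g * q * (1 / p * F) ^ (q - 1) ≤ q * (g * ((1 / p * F) ^ q) ^ (1 / p) - c) := by
  have hp := hpq.pos
  have hq := hpq.symm.pos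
  have hqp : q - 1 = q / p := hpq.symm.div_conj_eq_sub_one.symm
  have hpow : ((1 / p * F) ^ q) ^ (1 / p) = (1 / p * F) ^ (q / p) := by
    rw [← Real.rpow_mul (by positivity), mul_one_div]
  have hX : (1 / p * F) ^ (q / p) = F ^ (q / p) / p ^ (q / p) := by
    rw [Real.mul_rpow (by positivity) hF, one_div, Real.inv_rpow hp.le, inv_mul_eq_div]
  have hqc : q * c ≤ g * (1 / p * F) ^ (q / p) := by
    calc q * c ≤ q * (1 / (q * p ^ (q / p)) * g * F ^ (q / p)) := by gcongr
      _ = g * (1 / p * F) ^ (q / p) := by rw [hX]; field_simp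
  have hlhs : 1 / p * g * q * (1 / p * F) ^ (q / p) = g * (1 / p * F) ^ (q / p) * (q - 1) := by
    rw [hqp]; ring
  rw [hpow, hqp, hlhs]
  linarith

theorem stmt13_general (p p' : ℝ) (hp : 1 < p) (hp' : p' = p / (p - 1))
    (h f : ℝ → ℝ)
    (hhm : Measurable h) (hhb : ∃ M, ∀ t ∈ Set.Icc (0 : ℝ) 1, |h t| ≤ M)
    (hhlt : ∀ t ∈ Set.Ioo (0 : ℝ) 1, h t < h 0)
    (hfbd : ∀ t ∈ Set.Icc (0 : ℝ) 1,
      f t ≤ (1 / (p' * p ^ (p' / p))) * (h 0 - h t) *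
        (∫ τ in (0 : ℝ)..t, (h 0 - h τ)) ^ (p' / p)) :
    (((1 / p) * ∫ τ in (0 : ℝ)..(0 : ℝ), (h 0 - h τ)) ^ p' = 0) ∧
    (∀ t ∈ Set.Ioo (0 : ℝ) 1,
      0 < ((1 / p) * ∫ τ in (0 : ℝ)..t, (h 0 - h τ)) ^ p') ∧
    (0 ≤ ((1 / p) * ∫ τ in (0 : ℝ)..(1 : ℝ), (h 0 - h τ)) ^ p') ∧
    (∀ᵐ t ∂(volume.restrict (Set.Ioo (0 : ℝ) 1)), ∃ K',
      HasDerivAt (fun s => ((1 / p) * ∫ τ in (0 : ℝ)..s, (h 0 - h τ)) ^ p') K' t ∧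
      K' ≤ p' * ((h 0 - h t) *
        (((1 / p) * ∫ τ in (0 : ℝ)..t, (h 0 - h τ)) ^ p') ^ (1 / p) - f t)) := by
  have hpq : p.HolderConjugate p' := (Real.holderConjugate_iff_eq_conjExponent hp).2 hp'
  obtain ⟨M, hM⟩ := hhb
  have hint : IntervalIntegrable (fun τ => h 0 - h τ) volume 0 1 :=
    intervalIntegrable_const.sub <| intervalIntegrable_of_norm_le hhm.aestronglyMeasurable
      (by rwa [uIcc_of_le zero_le_one])
  have hFpos : ∀ t ∈ Ioc (0 : ℝ) 1, 0 < ∫ τ in (0 : ℝ)..t, (h 0 - h τ) := fun t ht =>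
    intervalIntegral.intervalIntegral_pos_of_pos_on
      (hint.mono_set (uIcc_subset_uIcc left_mem_uIcc (Icc_subset_uIcc ⟨ht.1.le, ht.2⟩)))
      (fun x hx => sub_pos.2 (hhlt x ⟨hx.1, hx.2.trans_le ht.2⟩)) ht.1
  refine ⟨?_, fun t ht => ?_, ?_, ?_⟩
  · rw [intervalIntegral.integral_same, mul_zero, Real.zero_rpow hpq.symm.ne_zero]
  · exact Real.rpow_pos_of_pos
      (mul_pos (one_div_pos.2 hpq.pos) (hFpos t (Ioo_subset_Ioc_self ht))) _
  · exact Real.rpow_nonneg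
      (mul_nonneg (one_div_pos.2 hpq.pos).le (hFpos 1 ⟨one_pos, le_rfl⟩).le) _
  · filter_upwards [ae_restrict_of_ae hint.ae_hasDerivAt_integral,
      ae_restrict_mem measurableSet_Ioo] with t hder ht
    have hF := (hder (Icc_subset_uIcc (Ioo_subset_Icc_self ht)) 0 left_mem_uIcc).const_mul (1 / p)
    exact ⟨_, hF.rpow_const (Or.inr hpq.symm.lt.le),
      hpq.deriv_rpow_le_of_le (hFpos t (Ioo_subset_Ioc_self ht)).le
        (hfbd t (Ioo_subset_Icc_self ht))⟩

/-- In the threshold case `c = h(0)`: if `h(0) > h(t)` on `(0,1)` and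
`0 < f(t) ≤ (1/(p' p^{p'/p}))(h(0)-h(t))[∫_0^t (h(0)-h(τ))dτ]^{p'/p}`, then
`K(t) = [(1/p)∫_0^t (h(0)-h(τ))dτ]^{p'}` satisfies `K(0) = 0`, `K > 0` on `(0,1)`,
`K(1) ≥ 0` and `K'(t) ≤ p'[(h(0)-h(t)) K(t)^{1/p} - f(t)]` a.e. on `(0,1)`. -/
theorem stmt13 (p p' : ℝ) (hp : 1 < p) (hp' : p' = p / (p - 1))
    (h f : ℝ → ℝ)
    (hhm : Measurable h) (hhb : ∃ M, ∀ t ∈ Set.Icc (0 : ℝ) 1, |h t| ≤ M)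
    (hhlt : ∀ t ∈ Set.Ioo (0 : ℝ) 1, h t < h 0)
    (hfpos : ∀ t ∈ Set.Ioo (0 : ℝ) 1, 0 < f t)
    (hfbd : ∀ t ∈ Set.Icc (0 : ℝ) 1,
      f t ≤ (1 / (p' * p ^ (p' / p))) * (h 0 - h t) *
        (∫ τ in (0 : ℝ)..t, (h 0 - h τ)) ^ (p' / p)) :
    (((1 / p) * ∫ τ in (0 : ℝ)..(0 : ℝ), (h 0 - h τ)) ^ p' = 0) ∧
    (∀ t ∈ Set.Ioo (0 : ℝ) 1,
      0 < ((1 / p) * ∫ τ in (0 : ℝ)..t, (h 0 - h τ)) ^ p') ∧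
    (0 ≤ ((1 / p) * ∫ τ in (0 : ℝ)..(1 : ℝ), (h 0 - h τ)) ^ p') ∧
    (∀ᵐ t ∂(volume.restrict (Set.Ioo (0 : ℝ) 1)), ∃ K',
      HasDerivAt (fun s => ((1 / p) * ∫ τ in (0 : ℝ)..s, (h 0 - h τ)) ^ p') K' t ∧
      K' ≤ p' * ((h 0 - h t) *
        (((1 / p) * ∫ τ in (0 : ℝ)..t, (h 0 - h τ)) ^ p') ^ (1 / p) - f t)) :=
  stmt13_general p p' hp hp' h f hhm hhb hhlt hfbd
end

section
/- Let p > 1, p' = p/(p-1), L > 0, t_0 ∈ (0,1], and suppose h : [0,t_0] → ℝ and c ∈ ℝ satisfy 0 < c - h(t) < L for all t ∈ [0,t_0], and f ≥ 0 on [0,t_0]. Define the operator T on C[0,t_0] by T(u)(t) = p' ∫_0^t [(c - h(τ))(max(u(τ),0))^{1/p} - f(τ)] dτ. Then T is monotone increasing (u_1 ≤ u_2 pointwise implies T(u_1) ≤ T(u_2) pointwise), and the function ỹ_0(t) = L^{p'} t^{p'} satisfies T(ỹ_0)(t) ≤ ỹ_0(t) for all t ∈ [0,t_0]. -/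
open MeasureTheory Set

/-!
Monotonicity is pointwise monotonicity of the integrand, since `c - h > 0` and `x ↦ x⁺ ^ (1/p)`
is increasing. For `ỹ₀ = (L t)^{p'}` the conjugacy relation `p' / p = p' - 1` gives
`ỹ₀^{1/p} = (L t)^{p' - 1}`, so with `c - h < L` and `f ≥ 0` the integrand is at most
`L^{p'} t^{p' - 1}`, whose integral over `[0, t]` is exactly `ỹ₀(t) / p'`.
-/

/-- The operator `T` of the paper, applied to `u` and evaluated at `t`. -/
noncomputable def integralOp (p p' c : ℝ) (h f u : ℝ → ℝ) (t : ℝ) : ℝ :=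
  p' * ∫ τ in (0 : ℝ)..t, ((c - h τ) * (max (u τ) 0) ^ (1 / p) - f τ)

theorem intervalIntegrable_mul_sub_of_abs_le {a b M : ℝ} {g φ f : ℝ → ℝ} (hab : a ≤ b)
    (hg : Measurable g) (hgM : ∀ x ∈ Icc a b, |g x| ≤ M) (hφ : Continuous φ)
    (hf : IntegrableOn f (Icc a b)) :
    IntervalIntegrable (fun x => g x * φ x - f x) volume a b := by
  rw [intervalIntegrable_iff_integrableOn_Icc_of_le hab]
  have hgi : IntegrableOn g (Icc a b) :=
    Measure.integrableOn_of_bounded (M := M) measure_Icc_lt_top.ne hg.aestronglyMeasurable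
      ((ae_restrict_iff' measurableSet_Icc).2 (ae_of_all _ hgM))
  exact (hgi.mul_continuousOn hφ.continuousOn isCompact_Icc).sub hf

theorem mul_integral_rpow_sub_one {q : ℝ} (hq : 0 < q) (t : ℝ) :
    q * ∫ τ in (0 : ℝ)..t, τ ^ (q - 1) = t ^ q := by
  rw [integral_rpow (Or.inl (by linarith)), sub_add_cancel, Real.zero_rpow hq.ne', sub_zero,
    mul_div_cancel₀ _ hq.ne']

theorem mul_rpow_conj_le {p p' κ L x : ℝ} (hpp' : p.HolderConjugate p') (hL : 0 < L)
    (hκ : κ ≤ L) (hx : 0 ≤ x) :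
    κ * (L ^ p' * x ^ p') ^ (1 / p) ≤ L ^ p' * x ^ (p' - 1) := by
  have hLx : 0 ≤ L * x := mul_nonneg hL.le hx
  have hroot : (L ^ p' * x ^ p') ^ (1 / p) = (L * x) ^ (p' - 1) := by
    rw [← Real.mul_rpow hL.le hx, ← Real.rpow_mul hLx, mul_one_div,
      hpp'.symm.div_conj_eq_sub_one]
  calc κ * (L ^ p' * x ^ p') ^ (1 / p)
      = κ * (L * x) ^ (p' - 1) := by rw [hroot]
    _ ≤ L * (L * x) ^ (p' - 1) := by gcongr
    _ = L ^ p' * x ^ (p' - 1) := by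
      rw [Real.mul_rpow hL.le hx, ← mul_assoc, ← Real.rpow_one_add' hL.le (by
        linarith [hpp'.symm.sub_one_pos]), add_sub_cancel]

section

variable {p p' c L t₀ : ℝ} {h f : ℝ → ℝ}

theorem intervalIntegrable_integrand (hp : 0 ≤ p) (hhm : Measurable h)
    (hch : ∀ t ∈ Icc 0 t₀, 0 < c - h t ∧ c - h t < L) (hfint : IntegrableOn f (Icc 0 t₀))
    {u : ℝ → ℝ} (hu : Continuous u) {t : ℝ} (ht : t ∈ Icc 0 t₀) :
    IntervalIntegrable (fun τ => (c - h τ) * (max (u τ) 0) ^ (1 / p) - f τ) volume 0 t := by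
  have hsub : Icc 0 t ⊆ Icc 0 t₀ := Icc_subset_Icc le_rfl ht.2
  refine intervalIntegrable_mul_sub_of_abs_le (M := L) ht.1 (measurable_const.sub hhm)
    (fun x hx => ?_) ((hu.max continuous_const).rpow_const fun _ => Or.inr (by positivity))
    (hfint.mono_set hsub)
  obtain ⟨hpos, hlt⟩ := hch x (hsub hx)
  exact (abs_of_pos hpos).le.trans hlt.le

theorem integralOp_mono (hp : 0 ≤ p) (hp' : 0 ≤ p') (hhm : Measurable h)
    (hch : ∀ t ∈ Icc 0 t₀, 0 < c - h t ∧ c - h t < L) (hfint : IntegrableOn f (Icc 0 t₀))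
    {u₁ u₂ : ℝ → ℝ} (hu₁ : Continuous u₁) (hu₂ : Continuous u₂)
    (hle : ∀ t ∈ Icc 0 t₀, u₁ t ≤ u₂ t) {t : ℝ} (ht : t ∈ Icc 0 t₀) :
    integralOp p p' c h f u₁ t ≤ integralOp p p' c h f u₂ t := by
  refine mul_le_mul_of_nonneg_left (intervalIntegral.integral_mono_on ht.1
    (intervalIntegrable_integrand hp hhm hch hfint hu₁ ht)
    (intervalIntegrable_integrand hp hhm hch hfint hu₂ ht) fun x hx => ?_) hp'
  have hx' : x ∈ Icc 0 t₀ := Icc_subset_Icc le_rfl ht.2 hx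
  gcongr
  · exact (hch x hx').1.le
  · exact hle x hx'

theorem integralOp_rpow_le (hpp' : p.HolderConjugate p') (hL : 0 < L) (hhm : Measurable h)
    (hch : ∀ t ∈ Icc 0 t₀, 0 < c - h t ∧ c - h t < L) (hfint : IntegrableOn f (Icc 0 t₀))
    (hfnn : ∀ t ∈ Icc 0 t₀, 0 ≤ f t) {t : ℝ} (ht : t ∈ Icc 0 t₀) :
    integralOp p p' c h f (fun τ => L ^ p' * τ ^ p') t ≤ L ^ p' * t ^ p' := by
  have hq : 0 < p' := hpp'.symm.pos
  have hy : Continuous fun τ : ℝ => L ^ p' * τ ^ p' :=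
    continuous_const.mul (continuous_id.rpow_const fun _ => Or.inr hq.le)
  have hbound : ∀ x ∈ Icc 0 t,
      (c - h x) * (max (L ^ p' * x ^ p') 0) ^ (1 / p) - f x ≤ L ^ p' * x ^ (p' - 1) := by
    intro x hx
    have hx' : x ∈ Icc 0 t₀ := Icc_subset_Icc le_rfl ht.2 hx
    rw [max_eq_left (by have := hx.1; positivity)]
    linarith [mul_rpow_conj_le hpp' hL (hch x hx').2.le hx.1, hfnn x hx']
  calc integralOp p p' c h f (fun τ => L ^ p' * τ ^ p') t
      ≤ p' * ∫ τ in (0 : ℝ)..t, L ^ p' * τ ^ (p' - 1) :=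
        mul_le_mul_of_nonneg_left (intervalIntegral.integral_mono_on ht.1
          (intervalIntegrable_integrand hpp'.pos.le hhm hch hfint hy ht)
          ((intervalIntegral.intervalIntegrable_rpow' (by linarith)).const_mul _) hbound) hq.le
    _ = L ^ p' * t ^ p' := by
      rw [intervalIntegral.integral_const_mul, mul_left_comm, mul_integral_rpow_sub_one hq]

end

theorem stmt14_general (p p' c L t₀ : ℝ) (hp : 1 < p) (hp' : p' = p / (p - 1))
    (hL : 0 < L)
    (h f : ℝ → ℝ)
    (hhm : Measurable h)
    (hch : ∀ t ∈ Set.Icc 0 t₀, 0 < c - h t ∧ c - h t < L)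
    (hfint : IntegrableOn f (Set.Icc 0 t₀))
    (hfnn : ∀ t ∈ Set.Icc 0 t₀, 0 ≤ f t) :
    (∀ u₁ u₂ : ℝ → ℝ, Continuous u₁ → Continuous u₂ →
      (∀ t ∈ Set.Icc 0 t₀, u₁ t ≤ u₂ t) →
      ∀ t ∈ Set.Icc 0 t₀,
        (p' * ∫ τ in (0 : ℝ)..t, ((c - h τ) * (max (u₁ τ) 0) ^ (1 / p) - f τ))
          ≤ p' * ∫ τ in (0 : ℝ)..t, ((c - h τ) * (max (u₂ τ) 0) ^ (1 / p) - f τ)) ∧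
    (∀ t ∈ Set.Icc 0 t₀,
      (p' * ∫ τ in (0 : ℝ)..t,
          ((c - h τ) * (max (L ^ p' * τ ^ p') 0) ^ (1 / p) - f τ))
        ≤ L ^ p' * t ^ p') := by
  have hpp' : p.HolderConjugate p' := (Real.holderConjugate_iff_eq_conjExponent hp).2 hp'
  exact ⟨fun u₁ u₂ hu₁ hu₂ hle t ht =>
      integralOp_mono hpp'.pos.le hpp'.symm.pos.le hhm hch hfint hu₁ hu₂ hle ht,
    fun t ht => integralOp_rpow_le hpp' hL hhm hch hfint hfnn ht⟩

/-- The operator `T(u)(t) = p' ∫_0^t [(c - h(τ))(u⁺(τ))^{1/p} - f(τ)] dτ` is monotone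
increasing on continuous functions, and `ỹ₀(t) = L^{p'} t^{p'}` satisfies
`T(ỹ₀) ≤ ỹ₀` on `[0,t₀]`, provided `0 < c - h < L` on `[0,t₀]` and `f ≥ 0`. -/
theorem stmt14 (p p' c L t₀ : ℝ) (hp : 1 < p) (hp' : p' = p / (p - 1))
    (hL : 0 < L) (ht₀ : t₀ ∈ Set.Ioc (0 : ℝ) 1)
    (h f : ℝ → ℝ)
    (hhm : Measurable h)
    (hch : ∀ t ∈ Set.Icc 0 t₀, 0 < c - h t ∧ c - h t < L)
    (hfint : IntegrableOn f (Set.Icc 0 t₀))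
    (hfnn : ∀ t ∈ Set.Icc 0 t₀, 0 ≤ f t) :
    (∀ u₁ u₂ : ℝ → ℝ, Continuous u₁ → Continuous u₂ →
      (∀ t ∈ Set.Icc 0 t₀, u₁ t ≤ u₂ t) →
      ∀ t ∈ Set.Icc 0 t₀,
        (p' * ∫ τ in (0 : ℝ)..t, ((c - h τ) * (max (u₁ τ) 0) ^ (1 / p) - f τ))
          ≤ p' * ∫ τ in (0 : ℝ)..t, ((c - h τ) * (max (u₂ τ) 0) ^ (1 / p) - f τ)) ∧
    (∀ t ∈ Set.Icc 0 t₀,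
      (p' * ∫ τ in (0 : ℝ)..t,
          ((c - h τ) * (max (L ^ p' * τ ^ p') 0) ^ (1 / p) - f τ))
        ≤ L ^ p' * t ^ p') :=
  stmt14_general p p' c L t₀ hp hp' hL h f hhm hch hfint hfnn
end

section
/- Let p > 1, p' = p/(p-1), L > 0, δ > 0, ν̃ > 0, and suppose 0 < c - h(t) < L on [0,δ] and f(t) ≥ ν̃ L^{p'} t^{p'-1} on (0,δ). With T(u)(t) = p' ∫_0^t [(c - h(τ))(u^+(τ))^{1/p} - f(τ)] dτ and ỹ_0(t) = L^{p'}t^{p'}, define ỹ_{n+1} = T(ỹ_n). Then for each n ≥ 0, ỹ_n(t) ≤ a_n L^{p'} t^{p'} for t ∈ (0,δ), where a_0 = 1 and a_{n+1} = (max(a_n,0))^{1/p} - ν̃. -/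
/-!
Since `p'/p = p' - 1`, we have `(L^{p'} τ^{p'})^{1/p} = L^{p'-1} τ^{p'-1}`, so together with
`c - h < L` the bound `ỹ_n ≤ a_n L^{p'} τ^{p'}` and the lower bound on `f` make the integrand of
`T` at most `((a_n⁺)^{1/p} - ν̃) L^{p'} τ^{p'-1}`; its `p'`-fold primitive is the bound claimed
for `ỹ_{n+1}`. The induction also carries continuity of `ỹ_n` on `[0, δ]`, which makes the
integrand integrable.
-/

open MeasureTheory Set

lemma max_zero_rpow_le_of_le_mul {y a X r : ℝ} (hX : 0 ≤ X) (hr : 0 ≤ r) (h : y ≤ a * X) :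
    max y 0 ^ r ≤ max a 0 ^ r * X ^ r := by
  rw [← Real.mul_rpow (le_max_right _ _) hX]
  refine Real.rpow_le_rpow (le_max_right _ _) (max_le ?_ (by positivity)) hr
  exact h.trans (mul_le_mul_of_nonneg_right (le_max_left _ _) hX)

lemma mul_max_zero_rpow_sub_le {p q k y φ a L ν τ : ℝ} (hpq : q.HolderConjugate p)
    (hL : 0 < L) (hτ : 0 ≤ τ) (hkL : k ≤ L) (hy : y ≤ a * L ^ q * τ ^ q)
    (hφ : ν * L ^ q * τ ^ (q - 1) ≤ φ) :
    k * max y 0 ^ (1 / p) - φ ≤ (max a 0 ^ (1 / p) - ν) * L ^ q * τ ^ (q - 1) := by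
  have hexp : q * (1 / p) = q - 1 := by rw [mul_one_div, hpq.div_conj_eq_sub_one]
  have hroot : max y 0 ^ (1 / p) ≤ max a 0 ^ (1 / p) * (L ^ (q - 1) * τ ^ (q - 1)) := by
    have := max_zero_rpow_le_of_le_mul (by positivity) (one_div_pos.2 hpq.symm.pos).le
      (hy.trans_eq (mul_assoc _ _ _))
    rwa [Real.mul_rpow (by positivity) (by positivity), ← Real.rpow_mul hL.le,
      ← Real.rpow_mul hτ, hexp] at this
  have hLq : L * L ^ (q - 1) = L ^ q := by
    rw [← Real.rpow_one_add' hL.le (by rw [add_sub_cancel]; exact hpq.pos.ne'), add_sub_cancel]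
  calc k * max y 0 ^ (1 / p) - φ
      ≤ L * (max a 0 ^ (1 / p) * (L ^ (q - 1) * τ ^ (q - 1))) - ν * L ^ q * τ ^ (q - 1) :=
        sub_le_sub (mul_le_mul hkL hroot (by positivity) hL.le) hφ
    _ = (max a 0 ^ (1 / p) - ν) * L ^ q * τ ^ (q - 1) := by rw [← hLq]; ring

lemma mul_integral_le_of_le_mul_rpow {g : ℝ → ℝ} {q C t : ℝ} (hq : 0 < q) (ht : 0 ≤ t)
    (hg : IntervalIntegrable g volume 0 t) (hle : ∀ τ ∈ Ioo 0 t, g τ ≤ C * τ ^ (q - 1)) :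
    q * ∫ τ in 0..t, g τ ≤ C * t ^ q := by
  have hpow : IntervalIntegrable (fun τ : ℝ => C * τ ^ (q - 1)) volume 0 t :=
    (intervalIntegral.intervalIntegrable_rpow' (by linarith)).const_mul C
  have hprim : q * ∫ τ in 0..t, C * τ ^ (q - 1) = C * t ^ q := by
    rw [intervalIntegral.integral_const_mul, integral_rpow (Or.inl (by linarith)),
      sub_add_cancel, Real.zero_rpow hq.ne', sub_zero]
    field_simp
  calc q * ∫ τ in 0..t, g τ ≤ q * ∫ τ in 0..t, C * τ ^ (q - 1) :=
        mul_le_mul_of_nonneg_left (intervalIntegral.integral_mono_on_of_le_Ioo ht hg hpow hle)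
          hq.le
    _ = C * t ^ q := hprim

lemma continuousOn_intervalIntegral_primitive {g : ℝ → ℝ} {a b : ℝ}
    (hg : IntegrableOn g (Icc a b)) :
    ContinuousOn (fun x => ∫ τ in a..x, g τ) (Icc a b) :=
  (intervalIntegral.continuousOn_primitive hg).congr fun _ hx =>
    intervalIntegral.integral_of_le hx.1

lemma integrableOn_mul_of_bounded_of_continuousOn {k g : ℝ → ℝ} {s : Set ℝ} {M : ℝ}
    (hs : IsCompact s) (hk : Measurable k) (hkM : ∀ t ∈ s, ‖k t‖ ≤ M) (hg : ContinuousOn g s) :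
    IntegrableOn (fun t => k t * g t) s :=
  (Measure.integrableOn_of_bounded hs.measure_lt_top.ne hk.aestronglyMeasurable
    (ae_restrict_of_forall_mem hs.measurableSet hkM)).mul_continuousOn hg hs

theorem stmt15_general (p p' c L δ ν : ℝ) (hp : 1 < p) (hp' : p' = p / (p - 1))
    (hL : 0 < L)
    (h f : ℝ → ℝ)
    (hhm : Measurable h)
    (hch : ∀ t ∈ Set.Icc 0 δ, 0 < c - h t ∧ c - h t < L)
    (hfint : IntegrableOn f (Set.Icc 0 δ))
    (hflb : ∀ t ∈ Set.Ioo 0 δ, ν * L ^ p' * t ^ (p' - 1) ≤ f t)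
    (ytil : ℕ → ℝ → ℝ)
    (hy0 : ∀ t, ytil 0 t = L ^ p' * t ^ p')
    (hyrec : ∀ n, ∀ t, ytil (n + 1) t =
      p' * ∫ τ in (0 : ℝ)..t, ((c - h τ) * (max (ytil n τ) 0) ^ (1 / p) - f τ))
    (a : ℕ → ℝ) (ha0 : a 0 = 1)
    (harec : ∀ n, a (n + 1) = (max (a n) 0) ^ (1 / p) - ν) :
    ∀ n, ∀ t ∈ Set.Ioo 0 δ, ytil n t ≤ a n * L ^ p' * t ^ p' := by
  have hpq : p'.HolderConjugate p := hp' ▸ (Real.HolderConjugate.conjExponent hp).symm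
  suffices key : ∀ n, ContinuousOn (ytil n) (Icc 0 δ) ∧
      ∀ t ∈ Ioo 0 δ, ytil n t ≤ a n * L ^ p' * t ^ p' from fun n => (key n).2
  intro n
  induction n with
  | zero =>
    refine ⟨?_, fun t _ => by rw [hy0, ha0, one_mul]⟩
    rw [funext hy0]
    exact (continuous_const.mul (Real.continuous_rpow_const hpq.nonneg)).continuousOn
  | succ n ih =>
    obtain ⟨hcont, hbound⟩ := ih
    have hint : IntegrableOn (fun τ => (c - h τ) * max (ytil n τ) 0 ^ (1 / p) - f τ)
        (Icc 0 δ) :=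
      (integrableOn_mul_of_bounded_of_continuousOn (k := fun τ => c - h τ) isCompact_Icc
        (measurable_const.sub hhm)
        (fun t ht => by rw [Real.norm_eq_abs, abs_of_pos (hch t ht).1]; exact (hch t ht).2.le)
        ((hcont.sup continuousOn_const).rpow_const fun _ _ => Or.inr (by positivity))).sub hfint
    refine ⟨?_, fun t ht => ?_⟩
    · rw [funext (hyrec n)]
      exact continuousOn_const.mul (continuousOn_intervalIntegral_primitive hint)
    · rw [hyrec, harec]
      refine mul_integral_le_of_le_mul_rpow hpq.pos ht.1.le
        ((intervalIntegrable_iff_integrableOn_Icc_of_le ht.1.le).2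
          (hint.mono_set (Icc_subset_Icc_right ht.2.le)))
        fun τ hτ => ?_
      have hτδ : τ ∈ Ioo 0 δ := ⟨hτ.1, hτ.2.trans ht.2⟩
      simpa only [mul_assoc] using mul_max_zero_rpow_sub_le hpq hL hτ.1.le
        (hch τ (Ioo_subset_Icc_self hτδ)).2.le
        (hbound τ hτδ) (hflb τ hτδ)

/-- Iteration bound: with `T(u)(t) = p' ∫_0^t [(c - h)(u⁺)^{1/p} - f]`,
`ỹ₀(t) = L^{p'}t^{p'}` and `ỹ_{n+1} = T(ỹ_n)`, if `0 < c - h < L` on `[0,δ]` and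
`f(t) ≥ ν̃ L^{p'} t^{p'-1}` on `(0,δ)`, then `ỹ_n(t) ≤ a_n L^{p'} t^{p'}` on `(0,δ)`
for each `n`, where `a₀ = 1` and `a_{n+1} = (a_n⁺)^{1/p} - ν̃`. -/
theorem stmt15 (p p' c L δ ν : ℝ) (hp : 1 < p) (hp' : p' = p / (p - 1))
    (hL : 0 < L) (hδ : 0 < δ) (hν : 0 < ν)
    (h f : ℝ → ℝ)
    (hhm : Measurable h)
    (hch : ∀ t ∈ Set.Icc 0 δ, 0 < c - h t ∧ c - h t < L)
    (hfint : IntegrableOn f (Set.Icc 0 δ))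
    (hflb : ∀ t ∈ Set.Ioo 0 δ, ν * L ^ p' * t ^ (p' - 1) ≤ f t)
    (ytil : ℕ → ℝ → ℝ)
    (hy0 : ∀ t, ytil 0 t = L ^ p' * t ^ p')
    (hyrec : ∀ n, ∀ t, ytil (n + 1) t =
      p' * ∫ τ in (0 : ℝ)..t, ((c - h τ) * (max (ytil n τ) 0) ^ (1 / p) - f τ))
    (a : ℕ → ℝ) (ha0 : a 0 = 1)
    (harec : ∀ n, a (n + 1) = (max (a n) 0) ^ (1 / p) - ν) :
    ∀ n, ∀ t ∈ Set.Ioo 0 δ, ytil n t ≤ a n * L ^ p' * t ^ p' :=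
  stmt15_general p p' c L δ ν hp hp' hL h f hhm hch hfint hflb ytil hy0 hyrec a ha0 harec
end

section
/- Let U : ℝ → [0,1] be a generalized solution (in the sense of Definition of solution, with associated flux v continuous, v(±∞) = 0, and the integral identity v(ẑ) - v(z) + c(U(ẑ) - U(z)) - (H(U(ẑ)) - H(U(z))) + ∫_z^{ẑ} g(U) dτ = 0) of the traveling-wave equation with boundary conditions U(-∞) = 1 and U(+∞) = 0. If g > 0 on (0,1), then c - H(1) = ∫_{-∞}^{+∞} g(U(τ)) dτ > 0, where H(s) = ∫_0^s h. In particular, c > H(1). -/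
/-!
Writing the flux identity as `∫_z^w g(U) = F w - F z` with
`F = H ∘ U - v - c U`, the limits of `U` and `v` at `±∞` and the continuity of `H` on `[0, 1]`
give `F(+∞) - F(-∞) = c - H(1)`. Since `g ∘ U ≥ 0`, this makes `g ∘ U` integrable with integral
`c - H(1)`, and the integral is positive because `U` takes the value `1/2`, where `g > 0`.
-/

open MeasureTheory Set Filter Topology

lemma nonneg_of_mem_Icc_of_pos_on_Ioo {g : ℝ → ℝ} (hg0 : g 0 = 0) (hg1 : g 1 = 0)
    (hgpos : ∀ s ∈ Ioo (0 : ℝ) 1, 0 < g s) {s : ℝ} (hs : s ∈ Icc (0 : ℝ) 1) : 0 ≤ g s := by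
  rcases hs.1.eq_or_lt with rfl | hs0
  · exact hg0.ge
  rcases hs.2.eq_or_lt with rfl | hs1
  · exact hg1.ge
  exact (hgpos s ⟨hs0, hs1⟩).le

lemma continuousOn_primitive_Icc_of_bounded {h : ℝ → ℝ} (hhm : Measurable h) {a b M : ℝ}
    (hM : ∀ s ∈ Icc a b, |h s| ≤ M) : ContinuousOn (fun s => ∫ τ in a..s, h τ) (Icc a b) := by
  rcases le_or_gt a b with hab | hab
  · have hint : IntegrableOn h (uIcc a b) := by
      rw [uIcc_of_le hab]
      refine Measure.integrableOn_of_bounded (M := M) measure_Icc_lt_top.ne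
        hhm.aestronglyMeasurable ?_
      filter_upwards [ae_restrict_mem measurableSet_Icc] with s hs
      exact (hM s hs).trans_eq' (Real.norm_eq_abs _)
    simpa only [uIcc_of_le hab] using intervalIntegral.continuousOn_primitive_interval hint
  · simp only [Icc_eq_empty_of_lt hab, continuousOn_empty]

lemma ContinuousOn.tendsto_comp {f u : ℝ → ℝ} {s : Set ℝ} {l : Filter ℝ} {x : ℝ}
    (hf : ContinuousOn f s) (hx : x ∈ s) (hu : Tendsto u l (𝓝 x)) (hus : ∀ z, u z ∈ s) :
    Tendsto (fun z => f (u z)) l (𝓝 (f x)) :=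
  (hf x hx).tendsto.comp (tendsto_nhdsWithin_iff.2 ⟨hu, Eventually.of_forall hus⟩)

lemma integrable_and_integral_eq_of_intervalIntegral_eq_sub {f F : ℝ → ℝ} {a b : ℝ}
    (hf : LocallyIntegrable f) (hf0 : ∀ τ, 0 ≤ f τ)
    (hF : ∀ z w, ∫ τ in z..w, f τ = F w - F z)
    (hbot : Tendsto F atBot (𝓝 a)) (htop : Tendsto F atTop (𝓝 b)) :
    Integrable f ∧ ∫ τ, f τ = b - a := by
  have hlim : Tendsto (fun n : ℝ => ∫ τ in -n..n, f τ) atTop (𝓝 (b - a)) := by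
    simp only [hF]
    exact htop.sub (hbot.comp tendsto_neg_atTop_atBot)
  have hint : Integrable f := by
    refine integrable_of_intervalIntegral_norm_tendsto (b - a)
      (fun n => (hf.integrableOn_isCompact isCompact_Icc).mono_set Ioc_subset_Icc_self)
      tendsto_neg_atTop_atBot tendsto_id ?_
    simpa only [Real.norm_of_nonneg (hf0 _), id] using hlim
  exact ⟨hint, tendsto_nhds_unique
    (intervalIntegral_tendsto_integral hint tendsto_neg_atTop_atBot tendsto_id) hlim⟩

theorem stmt16_general (c : ℝ) (g h H U v : ℝ → ℝ)
    (hg : ContinuousOn g (Set.Icc 0 1)) (hg0 : g 0 = 0) (hg1 : g 1 = 0)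
    (hgpos : ∀ s ∈ Set.Ioo (0 : ℝ) 1, 0 < g s)
    (hhm : Measurable h) (hhb : ∃ M, ∀ s ∈ Set.Icc (0 : ℝ) 1, |h s| ≤ M)
    (hH : ∀ s, H s = ∫ τ in (0 : ℝ)..s, h τ)
    (hU : Continuous U) (hUrange : ∀ z, U z ∈ Set.Icc (0 : ℝ) 1)
    (hUbot : Tendsto U atBot (nhds 1)) (hUtop : Tendsto U atTop (nhds 0))
    (hvbot : Tendsto v atBot (nhds 0)) (hvtop : Tendsto v atTop (nhds 0))
    (hid : ∀ z w : ℝ,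
      v w - v z + c * (U w - U z) - (H (U w) - H (U z))
        + (∫ τ in z..w, g (U τ)) = 0) :
    Integrable (fun τ => g (U τ)) ∧
    c - H 1 = (∫ τ : ℝ, g (U τ)) ∧
    (0 < ∫ τ : ℝ, g (U τ)) ∧ H 1 < c := by
  obtain ⟨M, hM⟩ := hhb
  have hgU : Continuous fun τ => g (U τ) := hg.comp_continuous hU hUrange
  have hgU0 : ∀ τ, 0 ≤ g (U τ) := fun τ => nonneg_of_mem_Icc_of_pos_on_Ioo hg0 hg1 hgpos (hUrange τ)
  have hHc : ContinuousOn H (Icc 0 1) := by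
    simpa only [← funext hH] using continuousOn_primitive_Icc_of_bounded hhm hM
  have hH0 : H 0 = 0 := by simp [hH]
  set F : ℝ → ℝ := fun w => H (U w) - v w - c * U w
  have hF : ∀ z w, ∫ τ in z..w, g (U τ) = F w - F z := fun z w => by
    linarith [hid z w]
  have hFbot : Tendsto F atBot (𝓝 (H 1 - 0 - c * 1)) :=
    ((hHc.tendsto_comp ⟨zero_le_one, le_rfl⟩ hUbot hUrange).sub hvbot).sub
      (hUbot.const_mul c)
  have hFtop : Tendsto F atTop (𝓝 (H 0 - 0 - c * 0)) :=
    ((hHc.tendsto_comp ⟨le_rfl, zero_le_one⟩ hUtop hUrange).sub hvtop).sub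
      (hUtop.const_mul c)
  obtain ⟨hint, hval⟩ := integrable_and_integral_eq_of_intervalIntegral_eq_sub
    hgU.locallyIntegrable hgU0 hF hFbot hFtop
  have hval' : c - H 1 = ∫ τ, g (U τ) := by rw [hval, hH0]; ring
  obtain ⟨z, hz⟩ : (1 / 2 : ℝ) ∈ range U := mem_range_of_exists_le_of_exists_ge hU
    (hUtop.eventually (eventually_le_nhds (by norm_num))).exists
    (hUbot.eventually (eventually_ge_nhds (by norm_num))).exists
  have hpos : 0 < ∫ τ, g (U τ) := integral_pos_of_integrable_nonneg_nonzero hgU hint hgU0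
    (x := z) (by rw [hz]; exact (hgpos _ (by norm_num)).ne')
  exact ⟨hint, hval', hpos, by linarith⟩

/-- For a generalized traveling-wave solution `U` (with flux `v`) connecting `1` at `-∞`
to `0` at `+∞`, one has `c - H(1) = ∫_{-∞}^{∞} g(U(τ)) dτ > 0`; in particular
`c > H(1)`, where `H(s) = ∫_0^s h`. -/
theorem stmt16 (c : ℝ) (g h H U v : ℝ → ℝ)
    (hg : ContinuousOn g (Set.Icc 0 1)) (hg0 : g 0 = 0) (hg1 : g 1 = 0)
    (hgpos : ∀ s ∈ Set.Ioo (0 : ℝ) 1, 0 < g s)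
    (hhm : Measurable h) (hhb : ∃ M, ∀ s ∈ Set.Icc (0 : ℝ) 1, |h s| ≤ M)
    (hH : ∀ s, H s = ∫ τ in (0 : ℝ)..s, h τ)
    (hU : Continuous U) (hUrange : ∀ z, U z ∈ Set.Icc (0 : ℝ) 1)
    (hUbot : Tendsto U atBot (nhds 1)) (hUtop : Tendsto U atTop (nhds 0))
    (hv : Continuous v)
    (hvbot : Tendsto v atBot (nhds 0)) (hvtop : Tendsto v atTop (nhds 0))
    (hid : ∀ z w : ℝ,
      v w - v z + c * (U w - U z) - (H (U w) - H (U z))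
        + (∫ τ in z..w, g (U τ)) = 0) :
    Integrable (fun τ => g (U τ)) ∧
    c - H 1 = (∫ τ : ℝ, g (U τ)) ∧
    (0 < ∫ τ : ℝ, g (U τ)) ∧ H 1 < c :=
  stmt16_general c g h H U v hg hg0 hg1 hgpos hhm hhb hH hU hUrange hUbot hUtop hvbot hvtop hid
end
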